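/- arXiv:1204.3108 — 5 statements merged into one kernel-verified Lean document; each statement's English description precedes it below -/
import Mathlib

section
/- If F is a filter on ℕ which, viewed as a subset of Cantor space 2^ℕ, is analytic, and f : ℕ → ℕ is a function such that the pushforward f_*(F) = {A ⊆ ℕ : f⁻¹[A] ∈ F} is an ultrafilter, then f_*(F) is a principal ultrafilter. -/
open Classical in
/-- The identification of subsets of ℕ with points of Cantor space. -/
noncomputable def chi (A : Set ℕ) : ℕ → Bool := fun n => if n ∈ A then true else false

/-!
Seen as a subset `S` of Cantor space, the ultrafilter `U = f_* F` is the preimage of `F` under the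
continuous map `x ↦ x ∘ f`, hence analytic. Negating all coordinates is a homeomorphism mapping
`S` onto its complement, so `Sᶜ` is analytic too and `S` is Borel, in particular Baire measurable.
If `U` were nonprincipal, `S` would be invariant under finite modifications, so by the topological
zero-one law `S` would be meagre or comeagre; both are impossible since `S` and `Sᶜ` are
homeomorphic.
-/

open MeasureTheory Set Filter

@[simp]
lemma mem_chi_image_sets {L : Filter ℕ} {x : ℕ → Bool} :
    x ∈ chi '' L.sets ↔ {n | x n = true} ∈ L := by
  constructor
  · rintro ⟨A, hA, rfl⟩
    simpa [chi] using hA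
  · intro hx
    refine ⟨{n | x n = true}, hx, funext fun n => ?_⟩
    cases h : x n <;> simp [chi, h]

lemma chi_image_map_sets (F : Filter ℕ) (f : ℕ → ℕ) :
    chi '' (F.map f).sets = (fun x => x ∘ f) ⁻¹' (chi '' F.sets) := by
  ext x
  simp only [mem_chi_image_sets, mem_preimage, mem_map]
  rfl

lemma continuous_xor_right (w : ℕ → Bool) :
    Continuous fun x : ℕ → Bool => fun n => xor (x n) (w n) :=
  continuous_pi fun n =>
    (continuous_of_discreteTopology (f := fun b : Bool => xor b (w n))).comp (continuous_apply n)

def xorHomeo (w : ℕ → Bool) : (ℕ → Bool) ≃ₜ (ℕ → Bool) where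
  toFun x n := xor (x n) (w n)
  invFun x n := xor (x n) (w n)
  left_inv x := by simp
  right_inv x := by simp
  continuous_toFun := continuous_xor_right w
  continuous_invFun := continuous_xor_right w

@[simp]
lemma xorHomeo_apply (w x : ℕ → Bool) (n : ℕ) : xorHomeo w x n = xor (x n) (w n) := rfl

lemma Ultrafilter.preimage_xorHomeo_true_chi_image (U : Ultrafilter ℕ) :
    xorHomeo (fun _ => true) ⁻¹' (chi '' (U : Filter ℕ).sets) =
      (chi '' (U : Filter ℕ).sets)ᶜ := by
  ext x
  have hflip : {n | xorHomeo (fun _ => true) x n = true} = {n | x n = true}ᶜ := by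
    ext n; simp
  rw [mem_preimage, mem_chi_image_sets, hflip, mem_compl_iff, mem_chi_image_sets,
    Ultrafilter.mem_coe, Ultrafilter.compl_mem_iff_notMem, Ultrafilter.mem_coe]

lemma mem_chi_image_sets_of_finite_diff {L : Filter ℕ} (hL : L ≤ cofinite) {x y : ℕ → Bool}
    (hxy : {n | x n ≠ y n}.Finite) (hx : x ∈ chi '' L.sets) : y ∈ chi '' L.sets := by
  rw [mem_chi_image_sets] at hx ⊢
  filter_upwards [hx, hL hxy.compl_mem_cofinite] with n hxn hn
  simp_all

lemma not_isMeagre_of_preimage_eq_compl {X : Type*} [TopologicalSpace X] [BaireSpace X]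
    [Nonempty X] {s : Set X} (h : X ≃ₜ X) (hs : h ⁻¹' s = sᶜ) : ¬IsMeagre s := by
  intro hmeagre
  have hcompl : IsMeagre sᶜ := hs ▸ hmeagre.preimage_of_isOpenMap h.continuous h.isOpenMap
  exact not_isMeagre_of_isOpen isOpen_univ univ_nonempty
    (union_compl_self s ▸ hmeagre.union hcompl)

lemma BaireMeasurableSet.exists_isOpen_isMeagre_diff {X : Type*} [TopologicalSpace X]
    {s : Set X} (hs : BaireMeasurableSet s) (hns : ¬IsMeagre s) :
    ∃ u, IsOpen u ∧ u.Nonempty ∧ IsMeagre (u \ s) := by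
  obtain ⟨u, hu, hsu⟩ := hs.residualEq_isOpen
  have hsu' := eventuallyEq_set.1 hsu
  refine ⟨u, hu, nonempty_iff_ne_empty.2 fun hempty => hns ?_, ?_⟩
  · filter_upwards [hsu'] with x hx hxs
    simpa [hempty] using hx.1 hxs
  · filter_upwards [hsu'] with x hx ⟨hxu, hxs⟩
    exact hxs (hx.2 hxu)

/-- Flipping finitely many coordinates moves any point into a basic cylinder contained in `u`,
without changing membership in `S`. -/
lemma isMeagre_compl_of_isMeagre_diff {S : Set (ℕ → Bool)}
    (hinv : ∀ x y : ℕ → Bool, {n | x n ≠ y n}.Finite → x ∈ S → y ∈ S)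
    {u : Set (ℕ → Bool)} (hu : IsOpen u) (hne : u.Nonempty) (huS : IsMeagre (u \ S)) :
    IsMeagre Sᶜ := by
  obtain ⟨z, hz⟩ := hne
  obtain ⟨_, ⟨w, k, rfl⟩, -, hwk⟩ :=
    (PiNat.isTopologicalBasis_cylinders fun _ => Bool).exists_subset_of_mem_open hz hu
  let flipOn (σ : Fin k → Bool) (n : ℕ) : Bool := if h : n < k then σ ⟨n, h⟩ else false
  have hcover : Sᶜ ⊆ ⋃ σ : Fin k → Bool, xorHomeo (flipOn σ) ⁻¹' (u \ S) := by
    intro x hx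
    refine mem_iUnion.2
      ⟨fun i => xor (x i) (w i), ⟨hwk fun n hn => by simp [flipOn, hn], ?_⟩⟩
    refine fun hS => hx (hinv _ _ ((finite_Iio k).subset fun n hn => ?_) hS)
    by_contra hnk
    simp [flipOn, show ¬n < k from hnk] at hn
  exact (isMeagre_iUnion fun σ =>
    huS.preimage_of_isOpenMap (xorHomeo _).continuous (xorHomeo _).isOpenMap).mono hcover

theorem isMeagre_or_isMeagre_compl_of_finite_diff {S : Set (ℕ → Bool)}
    (hS : BaireMeasurableSet S)
    (hinv : ∀ x y : ℕ → Bool, {n | x n ≠ y n}.Finite → x ∈ S → y ∈ S) :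
    IsMeagre S ∨ IsMeagre Sᶜ := by
  refine or_iff_not_imp_left.2 fun hns => ?_
  obtain ⟨u, hu, hne, huS⟩ := hS.exists_isOpen_isMeagre_diff hns
  exact isMeagre_compl_of_isMeagre_diff hinv hu hne huS

theorem analytic_pushforward_ultrafilter_principal
    (F : Filter ℕ) (hF : MeasureTheory.AnalyticSet (chi '' F.sets))
    (f : ℕ → ℕ) (U : Ultrafilter ℕ)
    (hU : (U : Filter ℕ) = F.map f) :
    ∃ n : ℕ, U = pure n := by
  have : PolishSpace (ℕ → Bool) := {}
  by_contra hprincipal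
  have hcof : (U : Filter ℕ) ≤ cofinite :=
    U.le_cofinite_or_eq_pure.resolve_right (by simpa using hprincipal)
  set S := chi '' (U : Filter ℕ).sets
  have hflip := U.preimage_xorHomeo_true_chi_image
  have hSan : AnalyticSet S := by
    rw [show S = _ from hU ▸ chi_image_map_sets F f]
    exact hF.preimage (continuous_pi fun n => continuous_apply (f n))
  have hScan : AnalyticSet Sᶜ := hflip ▸ hSan.preimage (xorHomeo _).continuous
  have hSbm : BaireMeasurableSet S := (hSan.measurableSet_of_compl hScan).baireMeasurableSet
  rcases isMeagre_or_isMeagre_compl_of_finite_diff hSbm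
    (fun _ _ => mem_chi_image_sets_of_finite_diff hcof) with hS | hS
  · exact not_isMeagre_of_preimage_eq_compl _ hflip hS
  · exact not_isMeagre_of_preimage_eq_compl _ (by rw [preimage_compl, hflip, compl_compl]) hS
end

section
/- A nonprincipal ultrafilter on ℕ, viewed as a subset of Cantor space 2^ℕ, does not have the Baire property. -/
/-!
Let `S` be the set of points of Cantor space whose support lies in `U`. Flipping all coordinates
outside a finite set `I` is a homeomorphism `f` which, as `U` is nonprincipal, maps `S` onto `Sᶜ`,
and which fixes a point of any basic open set constraining only coordinates in `I`. If `S`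
differed from an open set `u ≠ ∅` by a meagre set, then `Sᶜ` would differ from `f⁻¹ u` by a
meagre set, where `f⁻¹ u` meets `u` for a suitable `I`; so the empty set `S ∩ Sᶜ` would be
comeagre in the nonempty open set `u ∩ f⁻¹ u`, contradicting the Baire category theorem.
-/

open Filter Set Topology

theorem not_baireMeasurableSet_of_homeomorph_preimage_eq_compl {X : Type*} [TopologicalSpace X]
    [BaireSpace X] [Nonempty X] {S : Set X}
    (h : ∀ u : Set X, IsOpen u → u.Nonempty →
      ∃ f : X ≃ₜ X, f ⁻¹' S = Sᶜ ∧ (u ∩ f ⁻¹' u).Nonempty) :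
    ¬ BaireMeasurableSet S := by
  intro hS
  obtain ⟨u, hu, hSu⟩ := hS.residualEq_isOpen
  have hSc : ∀ f : X ≃ₜ X, f ⁻¹' S = Sᶜ → (Sᶜ : Set X) =ᵇ (f ⁻¹' u : Set X) := by
    intro f hf
    rw [← hf]
    exact hSu.filter_mono (tendsto_residual_of_isOpenMap f.continuous f.isOpenMap)
  have hu_ne : u.Nonempty := by
    obtain ⟨f, hf, -⟩ := h univ isOpen_univ univ_nonempty
    by_contra! rfl
    have huniv : (univ : Set X) =ᵇ (∅ : Set X) := by
      simpa only [Set.union_compl_self, preimage_empty, Set.union_empty] using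
        hSu.union (hSc f hf)
    exact not_isMeagre_of_isOpen isOpen_univ univ_nonempty (eventuallyEq_empty.mp huniv)
  obtain ⟨f, hf, hne⟩ := h u hu hu_ne
  have hempty : (u ∩ f ⁻¹' u : Set X) =ᵇ (∅ : Set X) := by
    simpa only [Set.inter_compl_self] using (hSu.inter (hSc f hf)).symm
  exact not_isMeagre_of_isOpen (hu.inter (hu.preimage f.continuous)) hne
    (eventuallyEq_empty.mp hempty)

section flipOutside

variable {α : Type*}

open Classical in
noncomputable def flipOutside (I : Finset α) : (α → Bool) ≃ₜ (α → Bool) where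
  toFun x a := if a ∈ I then x a else !x a
  invFun x a := if a ∈ I then x a else !x a
  left_inv x := funext fun a => by by_cases ha : a ∈ I <;> simp [ha]
  right_inv x := funext fun a => by by_cases ha : a ∈ I <;> simp [ha]
  continuous_toFun := continuous_pi fun a => by split_ifs <;> fun_prop
  continuous_invFun := continuous_pi fun a => by split_ifs <;> fun_prop

theorem flipOutside_apply_of_mem {I : Finset α} {a : α} (ha : a ∈ I) (x : α → Bool) :
    flipOutside I x a = x a := by
  simp [flipOutside, ha]

theorem flipOutside_apply_of_notMem {I : Finset α} {a : α} (ha : a ∉ I) (x : α → Bool) :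
    flipOutside I x a = !x a := by
  simp [flipOutside, ha]

theorem preimage_flipOutside_setOf_support_mem {U : Ultrafilter α}
    (hU : (U : Filter α) ≤ cofinite) (I : Finset α) :
    flipOutside I ⁻¹' {x | {a | x a = true} ∈ U} = {x | {a | x a = true} ∈ U}ᶜ := by
  ext x
  have hflip : ∀ᶠ a in (U : Filter α), flipOutside I x a = true ↔ a ∈ {a | x a = true}ᶜ :=
    hU (I.eventually_cofinite_notMem.mono fun a ha => by simp [flipOutside_apply_of_notMem ha])
  change {a | flipOutside I x a = true} ∈ U ↔ {a | x a = true} ∉ U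
  rw [← Ultrafilter.compl_mem_iff_notMem]
  exact eventually_congr hflip

theorem exists_inter_preimage_flipOutside_nonempty {u : Set (α → Bool)} (hu : IsOpen u)
    (hne : u.Nonempty) : ∃ I : Finset α, (u ∩ flipOutside I ⁻¹' u).Nonempty := by
  obtain ⟨x, hx⟩ := hne
  obtain ⟨I, v, hv, hIv⟩ := isOpen_pi_iff.mp hu x hx
  refine ⟨I, x, hx, hIv fun a ha => ?_⟩
  rw [flipOutside_apply_of_mem ha]
  exact (hv a ha).2

end flipOutside

theorem image_chi (F : Set (Set ℕ)) : chi '' F = (fun x => {n | x n = true}) ⁻¹' F := by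
  refine congrFun (image_eq_preimage_of_inverse (fun A => ?_) (fun x => ?_)) F
  · ext n
    by_cases hn : n ∈ A <;> simp [chi, hn]
  · funext n
    cases hx : x n <;> simp [chi, hx]

theorem nonprincipal_ultrafilter_not_baireMeasurable
    (U : Ultrafilter ℕ) (hU : ∀ A ∈ U, A.Infinite) :
    ¬ BaireMeasurableSet (chi '' {A : Set ℕ | A ∈ U}) := by
  have hU_le : ↑U ≤ cofinite := le_cofinite_iff_compl_singleton_mem.mpr fun n =>
    Ultrafilter.compl_mem_iff_notMem.mpr fun hn => hU _ hn (finite_singleton n)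
  rw [image_chi]
  refine not_baireMeasurableSet_of_homeomorph_preimage_eq_compl fun u hu hne => ?_
  obtain ⟨I, hI⟩ := exists_inter_preimage_flipOutside_nonempty hu hne
  exact ⟨flipOutside I, preimage_flipOutside_setOf_support_mem hU_le I, hI⟩
end

section
/- If F is an analytic filter on ℕ (as a subset of Cantor space), then F is not Rudin–Keisler above any nonprincipal ultrafilter; that is, there is no function f : ℕ → ℕ and nonprincipal ultrafilter U on ℕ such that U = {A ⊆ ℕ : f⁻¹[A] ∈ F}. -/
/-!
If `U = f_* F`, then `T = {x | {n | x n} ∈ U}` is the preimage of `chi '' F` under `x ↦ x ∘ f`,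
hence analytic, and `Tᶜ` is its image under flipping every bit, hence analytic too; by Lusin
separation `T` is Borel, so it has the Baire property. But since `U` is a nonprincipal
ultrafilter, flipping the bits on any cofinite set maps `T` onto `Tᶜ`. Such flips move a point as
little as we like, so if `T` were comeagre in a nonempty open set, so would be `Tᶜ` in a smaller
one. Hence `T` and likewise `Tᶜ` are meagre, contradicting the Baire category theorem.
-/

open MeasureTheory Filter Set Topology

section Flip

variable {α : Type*}

open Classical in
noncomputable def flipOn (S : Set α) : (α → Bool) ≃ₜ (α → Bool) where
  toFun x a := xor (decide (a ∈ S)) (x a)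
  invFun x a := xor (decide (a ∈ S)) (x a)
  left_inv x := by simp
  right_inv x := by simp
  continuous_toFun := by fun_prop
  continuous_invFun := by fun_prop

@[simp]
theorem flipOn_flipOn (S : Set α) (x : α → Bool) : flipOn S (flipOn S x) = x :=
  (flipOn S).symm_apply_apply x

theorem flipOn_apply_of_notMem {S : Set α} {a : α} (ha : a ∉ S) (x : α → Bool) :
    flipOn S x a = x a := by
  simp [flipOn, ha]

theorem flipOn_apply_of_mem {S : Set α} {a : α} (ha : a ∈ S) (x : α → Bool) :
    flipOn S x a = !x a := by
  simp [flipOn, ha]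

theorem tendsto_flipOn_smallSets_cofinite (x : α → Bool) :
    Tendsto (fun S => flipOn S x) (cofinite : Filter α).smallSets (𝓝 x) :=
  tendsto_pi_nhds.2 fun a => tendsto_nhds_of_eventually_eq <| eventually_smallSets.2
    ⟨{a}ᶜ, (finite_singleton a).compl_mem_cofinite,
      fun _ hS => flipOn_apply_of_notMem (fun h => hS h rfl) x⟩

theorem isMeagre_of_preimage_flipOn_eq_compl {T : Set (α → Bool)} (hT : BaireMeasurableSet T)
    (hflip : ∀ S ∈ cofinite, flipOn S ⁻¹' T = Tᶜ) : IsMeagre T := by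
  obtain ⟨V, hVo, hTV⟩ := hT.residualEq_isOpen
  suffices V = ∅ by
    subst this
    exact hTV.le
  by_contra! ⟨x, hx⟩
  obtain ⟨S, hS, hSx⟩ : ∃ S ∈ cofinite, flipOn S x ∈ V :=
    eventually_smallSets.1 ((tendsto_flipOn_smallSets_cofinite x).eventually (hVo.mem_nhds hx))
      |>.imp fun S ⟨hS, h⟩ => ⟨hS, h S subset_rfl⟩
  -- `W` is a nonempty open set invariant under the flip, which swaps `W \ T` and `W ∩ T`.
  set W := V ∩ flipOn S ⁻¹' V
  have hWo : IsOpen W := hVo.inter (hVo.preimage (flipOn S).continuous)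
  have hWflip : flipOn S ⁻¹' W = W := by
    ext y
    simp [W, and_comm]
  have hWT : IsMeagre (W \ T) := by
    filter_upwards [hTV.symm.le] with y hVT ⟨⟨hyV, _⟩, hyT⟩ using hyT (hVT hyV)
  have hWT' : IsMeagre (W ∩ T) := by
    have := hWT.preimage_of_isOpenMap (flipOn S).continuous (flipOn S).isOpenMap
    rwa [preimage_sdiff, hWflip, hflip S hS, sdiff_compl] at this
  exact not_isMeagre_of_isOpen hWo ⟨x, hx, by simpa using hSx⟩
    (by simpa [sdiff_union_inter] using hWT.union hWT')

theorem Ultrafilter.preimage_flipOn_setOf_mem (U : Ultrafilter α) {S : Set α} (hS : S ∈ U) :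
    flipOn S ⁻¹' {x | {a | x a = true} ∈ U} = {x | {a | x a = true} ∈ U}ᶜ := by
  ext x
  have hflip : {a | flipOn S x a = true} ∩ S = {a | x a = true}ᶜ ∩ S := by
    ext a
    by_cases ha : a ∈ S <;> simp [flipOn_apply_of_mem, ha]
  have mem_iff_inter_mem (B : Set α) : B ∈ U ↔ B ∩ S ∈ U :=
    (inter_mem_iff.trans (and_iff_left hS)).symm
  change _ ∈ U ↔ _ ∉ U
  rw [← U.compl_mem_iff_notMem, mem_iff_inter_mem, hflip, ← mem_iff_inter_mem]

theorem Ultrafilter.not_baireMeasurableSet_setOf_mem (U : Ultrafilter α)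
    (hU : (U : Filter α) ≤ cofinite) :
    ¬ BaireMeasurableSet {x : α → Bool | {a | x a = true} ∈ U} := by
  set T := {x : α → Bool | {a | x a = true} ∈ U}
  intro hT
  have hflip : ∀ S ∈ cofinite, flipOn S ⁻¹' T = Tᶜ := fun S hS =>
    U.preimage_flipOn_setOf_mem (hU hS)
  have hTm : IsMeagre T := isMeagre_of_preimage_flipOn_eq_compl hT hflip
  have hTcm : IsMeagre Tᶜ := isMeagre_of_preimage_flipOn_eq_compl hT.compl
    fun S hS => by rw [preimage_compl, hflip S hS, compl_compl]
  exact not_isMeagre_of_isOpen isOpen_univ univ_nonempty (by simpa using hTm.union hTcm)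

end Flip

theorem setOf_chi (A : Set ℕ) : {n | chi A n = true} = A := by
  ext n; simp [chi]

theorem chi_setOf (x : ℕ → Bool) : chi {n | x n = true} = x := by
  funext n; cases h : x n <;> simp [chi, h]

theorem image_chi_s5 (S : Set (Set ℕ)) : chi '' S = {x | {n | x n = true} ∈ S} :=
  congrFun (image_eq_preimage_of_inverse (g := fun (x : ℕ → Bool) => {n | x n = true})
    setOf_chi chi_setOf) S

-- Instance search does not find this through `SeparableSpace` and `IsCompletelyMetrizableSpace`.
instance : PolishSpace (ℕ → Bool) := by
  have : TopologicalSpace.IsCompletelyMetrizableSpace (ℕ → Bool) := inferInstance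
  infer_instance

theorem analytic_filter_not_RK_above_nonprincipal_ultrafilter
    (F : Filter ℕ) (hF : MeasureTheory.AnalyticSet (chi '' F.sets)) :
    ¬ ∃ (f : ℕ → ℕ) (U : Ultrafilter ℕ),
        (U : Filter ℕ) ≤ Filter.cofinite ∧ (U : Filter ℕ) = F.map f := by
  rintro ⟨f, U, hU, hUF⟩
  set T := {x : ℕ → Bool | {n | x n = true} ∈ U}
  have hT : AnalyticSet T := by
    have : T = (fun x => x ∘ f) ⁻¹' (chi '' F.sets) := by
      ext x
      simp [T, image_chi_s5, ← Ultrafilter.mem_coe, hUF]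
    exact this ▸ hF.preimage (by fun_prop)
  have hTc : AnalyticSet Tᶜ :=
    U.preimage_flipOn_setOf_mem univ_mem ▸ hT.preimage (flipOn univ).continuous
  exact U.not_baireMeasurableSet_setOf_mem hU (hT.measurableSet_of_compl hTc).baireMeasurableSet
end

section
/- βℕ contains no injective convergent sequence: if (x_n) is a sequence of ultrafilters in βℕ converging (in the usual topological sense) to a point p ∈ βℕ, then (x_n) is not injective. -/
/-!
Like every Stone–Čech compactification of a discrete set, `βℕ` is projective among compact
Hausdorff spaces and hence extremally disconnected: closures of open sets are open. In such a
space, a sequence converging to `p` while avoiding `p` has a subsequence with pairwise disjoint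
open neighbourhoods `V k`. The unions of the `V k` over even and over odd `k` are then disjoint
open sets, so their closures are disjoint, yet both closures contain `p`. Hence every convergent
sequence is eventually constant, and in particular not injective.
-/

open Filter Function Set Topology

theorem Filter.extraction_forall_lt_of_eventually {R : ℕ → ℕ → Prop}
    (h : ∀ n, ∀ᶠ k in atTop, R n k) :
    ∃ φ : ℕ → ℕ, StrictMono φ ∧ ∀ i j, i < j → R (φ i) (φ j) := by
  have hnext : ∀ N, ∃ k, N < k ∧ ∀ m ≤ N, R m k := fun N =>
    ((eventually_gt_atTop N).and
      ((eventually_all_finite (finite_Iic N)).2 fun m _ => h m)).exists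
  choose next hlt hrel using hnext
  let φ : ℕ → ℕ := fun n => next^[n] 0
  have hφ : StrictMono φ := strictMono_nat_of_lt_succ fun n => by
    simpa only [φ, iterate_succ_apply'] using hlt (φ n)
  refine ⟨φ, hφ, fun i j hij => ?_⟩
  obtain ⟨j, rfl⟩ := Nat.exists_eq_add_of_lt hij
  have hφj : φ (i + j + 1) = next (φ (i + j)) := iterate_succ_apply' next _ 0
  rw [hφj]
  exact hrel _ _ (hφ.monotone (Nat.le_add_right i j))

theorem Filter.Tendsto.exists_strictMono_pairwiseDisjoint_isOpen {X : Type*}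
    [TopologicalSpace X] [T2Space X] {x : ℕ → X} {p : X} (hx : Tendsto x atTop (𝓝 p))
    (hne : ∀ n, x n ≠ p) :
    ∃ φ : ℕ → ℕ, StrictMono φ ∧ ∃ V : ℕ → Set X,
      (∀ k, IsOpen (V k)) ∧ (∀ k, x (φ k) ∈ V k) ∧ Pairwise (Disjoint on V) := by
  choose U W hU hW hxU hpW hUW using fun n => t2_separation (hne n)
  obtain ⟨φ, hφ, hφW⟩ := extraction_forall_lt_of_eventually fun n =>
    hx.eventually ((hW n).mem_nhds (hpW n))
  -- shrinking `U (φ k)` into the earlier `W (φ i)` makes it disjoint from every earlier `U (φ i)`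
  let V : ℕ → Set X := fun k => U (φ k) ∩ ⋂ i ∈ Iio k, W (φ i)
  have hVW : ∀ i k, i < k → V k ⊆ W (φ i) := fun i k hik =>
    inter_subset_right.trans (biInter_subset_of_mem hik)
  refine ⟨φ, hφ, V, fun k => (hU _).inter ((finite_Iio k).isOpen_biInter fun i _ => hW _),
    fun k => ⟨hxU _, mem_iInter₂.2 fun i hik => hφW i k hik⟩, ?_⟩
  exact (pairwise_disjoint_on V).2 fun i k hik =>
    (hUW (φ i)).mono inter_subset_left (hVW i k hik)

theorem Filter.Tendsto.eventually_eq_of_extremallyDisconnected {X : Type*}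
    [TopologicalSpace X] [T2Space X] [ExtremallyDisconnected X] {x : ℕ → X} {p : X}
    (hx : Tendsto x atTop (𝓝 p)) : ∀ᶠ n in atTop, x n = p := by
  by_contra h
  obtain ⟨ψ, hψ, hne⟩ := extraction_of_frequently_atTop (not_eventually.1 h)
  obtain ⟨φ, hφ, V, hV, hxV, hdisj⟩ :=
    (hx.comp hψ.tendsto_atTop).exists_strictMono_pairwiseDisjoint_isOpen hne
  let A := ⋃ k, V (2 * k)
  let B := ⋃ k, V (2 * k + 1)
  have hAB : Disjoint A B := by
    simp only [A, B, disjoint_iUnion_left, disjoint_iUnion_right]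
    exact fun k l => hdisj (by omega)
  have hy : Tendsto (x ∘ ψ ∘ φ) atTop (𝓝 p) := hx.comp (hψ.comp hφ).tendsto_atTop
  have hEven : StrictMono fun k : ℕ => 2 * k := fun _ _ h => by dsimp only; omega
  have hOdd : StrictMono fun k : ℕ => 2 * k + 1 := fun _ _ h => by dsimp only; omega
  have hpA : p ∈ closure A :=
    mem_closure_of_tendsto (hy.comp hEven.tendsto_atTop)
      (Eventually.of_forall fun k => mem_iUnion_of_mem k (hxV (2 * k)))
  have hpB : p ∈ closure B :=
    mem_closure_of_tendsto (hy.comp hOdd.tendsto_atTop)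
      (Eventually.of_forall fun k => mem_iUnion_of_mem k (hxV (2 * k + 1)))
  exact (ExtremallyDisconnected.disjoint_closure_of_disjoint_isOpen hAB
    (isOpen_iUnion fun _ => hV _) (isOpen_iUnion fun _ => hV _)).ne_of_mem hpA hpB rfl

theorem Ultrafilter.projective {α : Type*} : CompactT2.Projective (Ultrafilter α) := by
  intro Y Z _ _ _ _ _ _ f g hf hg hg_surj
  choose s hs using hg_surj
  have hext := continuous_ultrafilter_extend (s ∘ f ∘ pure)
  refine ⟨Ultrafilter.extend (s ∘ f ∘ pure), hext,
    denseRange_pure.equalizer (hg.comp hext) hf (funext fun a => ?_)⟩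
  simp [ultrafilter_extend_pure, hs]

instance {α : Type*} : ExtremallyDisconnected (Ultrafilter α) :=
  Ultrafilter.projective.extremallyDisconnected

theorem no_injective_convergent_sequence_in_betaN
    (x : ℕ → Ultrafilter ℕ) (p : Ultrafilter ℕ)
    (hconv : ∀ V ∈ nhds p, ({n : ℕ | x n ∈ V})ᶜ.Finite) :
    ¬ Function.Injective x := by
  intro hinj
  have hx : Tendsto x atTop (𝓝 p) := by
    rw [← Nat.cofinite_eq_atTop]
    exact fun V hV => mem_cofinite.2 (hconv V hV)
  obtain ⟨n, hn⟩ := eventually_atTop.1 hx.eventually_eq_of_extremallyDisconnected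
  exact n.succ_ne_self (hinj ((hn (n + 1) n.le_succ).trans (hn n le_rfl).symm))
end

section
/- In βℕ, basic clopen sets separate points from countable sets: if p ∈ βℕ and (x_n) is an injective sequence in βℕ with x_n ≠ p for all n, then there exist sets C_n ⊆ ℕ (n < ω) such that the Ĉ_n = {q ∈ βℕ : C_n ∈ q} are pairwise disjoint, p ∉ Ĉ_n for all n, and every x_k belongs to some Ĉ_n. -/
/-!
Choose `A n ∈ x n` with `A n ∉ p` and disjointify: `C n = A n \ ⋃ m < n, A m`. The `C n` are
pairwise disjoint and miss `p`, and `x k` contains `C n` for the least `n` with `A n ∈ x k`,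
since an ultrafilter containing none of finitely many sets contains the complement of their union.
-/

namespace Ultrafilter

variable {α : Type*}

theorem exists_mem_notMem_of_ne {p q : Ultrafilter α} (h : q ≠ p) : ∃ s ∈ q, s ∉ p := by
  by_contra! hqp
  exact h (eq_of_le fun s hs => hqp s hs).symm

theorem disjoint_setOf_mem {s t : Set α} (h : Disjoint s t) :
    Disjoint {u : Ultrafilter α | s ∈ u} {u | t ∈ u} :=
  Set.disjoint_left.2 fun u hs ht => u.empty_notMem (h.inter_eq ▸ Filter.inter_mem hs ht)

theorem exists_disjointed_mem {u : Ultrafilter α} {s : ℕ → Set α} {k : ℕ} (hk : s k ∈ u) :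
    ∃ n, disjointed s n ∈ u := by
  classical
  have hex : ∃ n, s n ∈ u := ⟨k, hk⟩
  refine ⟨Nat.find hex, ?_⟩
  rw [disjointed_eq_inter_compl]
  refine Filter.inter_mem (Nat.find_spec hex) ((Filter.biInter_mem (Set.finite_Iio _)).2 ?_)
  exact fun j hj => compl_mem_iff_notMem.2 (Nat.find_min hex hj)

end Ultrafilter

theorem separate_point_from_injective_sequence_general
    (p : Ultrafilter ℕ) (x : ℕ → Ultrafilter ℕ)
    (hxp : ∀ n, x n ≠ p) :
    ∃ C : ℕ → Set ℕ,
      Pairwise (fun n m => Disjoint {q : Ultrafilter ℕ | C n ∈ q} {q : Ultrafilter ℕ | C m ∈ q}) ∧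
      (∀ n, C n ∉ p) ∧
      (∀ k, ∃ n, C n ∈ x k) := by
  choose A hAx hAp using fun n => Ultrafilter.exists_mem_notMem_of_ne (hxp n)
  refine ⟨disjointed A, fun n m hnm => ?_, fun n hn => ?_, fun k => ?_⟩
  · exact Ultrafilter.disjoint_setOf_mem (disjoint_disjointed A hnm)
  · exact hAp n (Filter.mem_of_superset hn (disjointed_subset A n))
  · exact Ultrafilter.exists_disjointed_mem (hAx k)

theorem separate_point_from_injective_sequence
    (p : Ultrafilter ℕ) (x : ℕ → Ultrafilter ℕ)
    (hinj : Function.Injective x) (hxp : ∀ n, x n ≠ p) :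
    ∃ C : ℕ → Set ℕ,
      Pairwise (fun n m => Disjoint {q : Ultrafilter ℕ | C n ∈ q} {q : Ultrafilter ℕ | C m ∈ q}) ∧
      (∀ n, C n ∉ p) ∧
      (∀ k, ∃ n, C n ∈ x k) :=
  separate_point_from_injective_sequence_general p x hxp
end
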